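/- arXiv:2502.01488 — 2 statements merged into one kernel-verified Lean document; each statement's English description precedes it below -/
import Mathlib

section
/- Let f_1, f_2 : ℝ^n × ℝ^m → ℝ^n be componentwise convex and differentiable at (x°, u°), with Jacobians A_i = ∂f_i/∂x(x°,u°), B_i = ∂f_i/∂u(x°,u°) for i = 1,2. Let δ > 0, K an m×n matrix, c ∈ ℝ^m. Let α ∈ ℝ^n, β ∈ ℝ with β + 1ᵀα ≥ 0, and let s⁰,…,sⁿ be the vertices of the simplex S(α,β). Let W ⊆ ℝ^n, w_min ∈ ℝ^n and w̄ ∈ ℝ be such that every w ∈ W satisfies w ≥ w_min componentwise and 1ᵀw ≤ w̄. Suppose α⁺ ∈ ℝ^n and β⁺ ∈ ℝ satisfy, for every j ∈ {0,…,n}: (i) α⁺ ≥ −sʲ + δ(f_2(x°+sʲ, u°+Ksʲ+c) − f_2(x°,u°)) − δ(A_1 + B_1 K)sʲ − δ B_1 c − δ w_min componentwise, and (ii) β⁺ ≥ 1ᵀ( sʲ + δ(f_1(x°+sʲ, u°+Ksʲ+c) − f_1(x°,u°)) − δ(A_2 + B_2 K)sʲ − δ B_2 c ) + δ w̄. Then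 for every s ∈ S(α,β) and every w ∈ W, the updated perturbation s⁺ = s + δ(f_1(x°+s, u°+Ks+c) − f_1(x°,u°)) − δ(f_2(x°+s, u°+Ks+c) − f_2(x°,u°)) + δw belongs to S(α⁺, β⁺), i.e. −s⁺ ≤ α⁺ componentwise and 1ᵀs⁺ ≤ β⁺. -/
open Matrix

/-- First-order lower bound for a convex differentiable function. -/
lemma convexOn_linearization {E : Type*} [NormedAddCommGroup E] [NormedSpace ℝ E]
    {g : E → ℝ} (hg : ConvexOn ℝ Set.univ g) {D : E →L[ℝ] ℝ} {p₀ : E}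
    (hD : HasFDerivAt g D p₀) (p : E) : g p₀ + D (p - p₀) ≤ g p := by
  set ψ : ℝ → ℝ := fun t => g (p₀ + t • (p - p₀)) with hψdef
  have hψconv : ConvexOn ℝ Set.univ ψ := by
    have h := hg.comp_affineMap (AffineMap.lineMap p₀ p)
    have : (g ∘ (AffineMap.lineMap p₀ p)) = ψ := by
      funext t
      simp [AffineMap.lineMap_apply, hψdef, add_comm, vsub_eq_sub, vadd_eq_add]
    rw [this] at h
    simpa using h
  have hpath : HasDerivAt (fun t : ℝ => p₀ + t • (p - p₀)) (p - p₀) 0 := by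
    simpa using ((hasDerivAt_id (0:ℝ)).smul_const (p - p₀)).const_add p₀
  have hder : HasDerivAt ψ (D (p - p₀)) 0 := by
    have hD' : HasFDerivAt g D ((fun t : ℝ => p₀ + t • (p - p₀)) 0) := by
      simpa using hD
    have := hD'.comp_hasDerivAt (x := (0:ℝ)) hpath
    exact this
  have hs := hψconv.le_slope_of_hasDerivAt (Set.mem_univ (0:ℝ)) (Set.mem_univ (1:ℝ))
    one_pos hder
  have : slope ψ 0 1 = g p - g p₀ := by
    simp [slope, hψdef]
  rw [this] at hs
  linarith


/-- The simplex `S(α,β) = {s ∈ ℝⁿ : −s ≤ α componentwise, 1ᵀs ≤ β}`. -/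
def simplexSet {n : ℕ} (α : Fin n → ℝ) (β : ℝ) : Set (Fin n → ℝ) :=
  {s | (∀ i, -s i ≤ α i) ∧ ∑ i, s i ≤ β}

/-- The vertices of `S(α,β)`: `s⁰ = −α` and
`sʲ = −α + (β + 1ᵀα) eⱼ` for `j = 1, …, n`. -/
def simplexVertex {n : ℕ} (α : Fin n → ℝ) (β : ℝ) : Fin (n + 1) → Fin n → ℝ :=
  Fin.cases (-α) (fun j => -α + (β + ∑ i, α i) • (Pi.single j 1 : Fin n → ℝ))

/-- One-step tube propagation for DC-TMPC with simplex cross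
sections.  If `α⁺, β⁺` satisfy the vertex inequalities (i) and (ii), then for
every `s ∈ S(α,β)` and every disturbance `w ∈ W` the updated perturbation
`s⁺ = s + δ(f₁(x₀+s,u₀+Ks+c) − f₁(x₀,u₀)) − δ(f₂(x₀+s,u₀+Ks+c) − f₂(x₀,u₀)) + δw`
belongs to `S(α⁺,β⁺)`. -/
theorem dc_tmpc_tube_propagation
    {n m : ℕ} (f₁ f₂ : (Fin n → ℝ) × (Fin m → ℝ) → (Fin n → ℝ))
    (hconv₁ : ∀ i, ConvexOn ℝ Set.univ (fun p => f₁ p i))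
    (hconv₂ : ∀ i, ConvexOn ℝ Set.univ (fun p => f₂ p i))
    (x₀ : Fin n → ℝ) (u₀ : Fin m → ℝ)
    (D₁ D₂ : ((Fin n → ℝ) × (Fin m → ℝ)) →L[ℝ] (Fin n → ℝ))
    (hD₁ : HasFDerivAt f₁ D₁ (x₀, u₀)) (hD₂ : HasFDerivAt f₂ D₂ (x₀, u₀))
    (A₁ A₂ : Matrix (Fin n) (Fin n) ℝ) (B₁ B₂ : Matrix (Fin n) (Fin m) ℝ)
    (hAB₁ : ∀ sv : (Fin n → ℝ) × (Fin m → ℝ),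
      D₁ sv = A₁.mulVec sv.1 + B₁.mulVec sv.2)
    (hAB₂ : ∀ sv : (Fin n → ℝ) × (Fin m → ℝ),
      D₂ sv = A₂.mulVec sv.1 + B₂.mulVec sv.2)
    (δ : ℝ) (hδ : 0 < δ)
    (K : Matrix (Fin m) (Fin n) ℝ) (c : Fin m → ℝ)
    (α : Fin n → ℝ) (β : ℝ) (hαβ : 0 ≤ β + ∑ i, α i)
    (W : Set (Fin n → ℝ)) (wmin : Fin n → ℝ) (wbar : ℝ)
    (hW : ∀ w ∈ W, (∀ i, wmin i ≤ w i) ∧ ∑ i, w i ≤ wbar)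
    (α' : Fin n → ℝ) (β' : ℝ)
    (hα' : ∀ j : Fin (n + 1), ∀ i : Fin n,
      (-(simplexVertex α β j)
        + δ • (f₂ (x₀ + simplexVertex α β j,
                   u₀ + K.mulVec (simplexVertex α β j) + c) - f₂ (x₀, u₀))
        - δ • ((A₁ + B₁ * K).mulVec (simplexVertex α β j))
        - δ • (B₁.mulVec c) - δ • wmin) i ≤ α' i)
    (hβ' : ∀ j : Fin (n + 1),
      (∑ i, (simplexVertex α β j
        + δ • (f₁ (x₀ + simplexVertex α β j,
                   u₀ + K.mulVec (simplexVertex α β j) + c) - f₁ (x₀, u₀))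
        - δ • ((A₂ + B₂ * K).mulVec (simplexVertex α β j))
        - δ • (B₂.mulVec c)) i) + δ * wbar ≤ β') :
    ∀ s ∈ simplexSet α β, ∀ w ∈ W,
      s + δ • (f₁ (x₀ + s, u₀ + K.mulVec s + c) - f₁ (x₀, u₀))
        - δ • (f₂ (x₀ + s, u₀ + K.mulVec s + c) - f₂ (x₀, u₀))
        + δ • w ∈ simplexSet α' β' := by
  intro s hs w hw
  obtain ⟨hs1, hs2⟩ := hs
  obtain ⟨hw1, hw2⟩ := hW w hw
  -- abbreviations
  set sv : Fin (n + 1) → Fin n → ℝ := simplexVertex α β with hsvdef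
  set r : ℝ := β + ∑ i, α i with hrdef
  set t : Fin n → ℝ := fun i => s i + α i with htdef
  have ht0 : ∀ i, 0 ≤ t i := fun i => by have := hs1 i; simp only [htdef]; linarith
  have htsum : (∑ i, t i) ≤ r := by
    simp only [htdef, hrdef, Finset.sum_add_distrib]; linarith
  set lam : Fin (n + 1) → ℝ :=
    Fin.cases (1 - (∑ i, t i) / r) (fun j => t j / r) with hlamdef
  have hlam0 : lam 0 = 1 - (∑ i, t i) / r := rfl
  have hlamsucc : ∀ j, lam j.succ = t j / r := fun j => rfl
  have hTnn : 0 ≤ ∑ i, t i := Finset.sum_nonneg fun i _ => ht0 i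
  have hdivle : (∑ i, t i) / r ≤ 1 := by
    rcases lt_or_eq_of_le hαβ with h | h
    · rw [div_le_one h]; exact htsum
    · simp [← h]
  have hlamnn : ∀ j, 0 ≤ lam j := by
    intro j
    refine Fin.cases ?_ ?_ j
    · rw [hlam0]; linarith
    · intro j; rw [hlamsucc]; exact div_nonneg (ht0 j) hαβ
  have hlamsum : ∑ j, lam j = 1 := by
    rw [Fin.sum_univ_succ, hlam0]
    simp only [hlamsucc]
    rw [← Finset.sum_div]
    ring
  have htkey : ∀ j, t j / r * r = t j := by
    intro j
    rcases lt_or_eq_of_le hαβ with h | h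
    · exact div_mul_cancel₀ _ h.ne'
    · have hT0 : ∑ i, t i = 0 := le_antisymm (by rw [← h] at htsum; exact htsum) hTnn
      have hj : t j = 0 :=
        (Finset.sum_eq_zero_iff_of_nonneg (fun i _ => ht0 i)).mp hT0 j (Finset.mem_univ j)
      simp [hj]
  -- convex-combination representation of s
  have hrepr : ∑ j, lam j • sv j = s := by
    funext i
    rw [Finset.sum_apply, Fin.sum_univ_succ]
    have hstep : ∀ j : Fin n, (lam j.succ • sv j.succ) i
        = t j / r * (-α i) + t j * ((Pi.single j (1:ℝ) : Fin n → ℝ) i) := by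
      intro j
      rw [hlamsucc]
      simp only [hsvdef, simplexVertex, Fin.cases_succ, Pi.smul_apply, Pi.add_apply,
        Pi.neg_apply, smul_eq_mul]
      rw [mul_add, ← mul_assoc, htkey j]
    have h0 : (lam 0 • sv 0) i = (1 - (∑ x, t x) / r) * (-α i) := by
      rw [hlam0]
      simp [hsvdef, simplexVertex]
    have h1 : ∑ j : Fin n, t j * ((Pi.single j (1:ℝ) : Fin n → ℝ) i) = t i := by
      rw [Finset.sum_eq_single i]
      · simp
      · intro b _ hb; simp [Pi.single_apply, Ne.symm hb]
      · intro h; exact absurd (Finset.mem_univ i) h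
    rw [Finset.sum_congr rfl fun j _ => hstep j]
    rw [show (∑ j : Fin n, (t j / r * -α i + t j * ((Pi.single j (1:ℝ) : Fin n → ℝ) i)))
        = (∑ j : Fin n, t j / r * -α i)
          + ∑ j : Fin n, t j * ((Pi.single j (1:ℝ) : Fin n → ℝ) i)
      from Finset.sum_add_distrib]
    rw [← Finset.sum_mul, h1, ← Finset.sum_div, h0]
    have hti : t i = s i + α i := rfl
    rw [hti]
    ring
  -- helper sum identities
  have happ : ∀ i, ∑ j, lam j * sv j i = s i := by
    intro i
    have h := congrFun hrepr i
    simpa [Finset.sum_apply] using h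
  have hconstsum : ∀ C : ℝ, ∑ j, lam j * C = C := by
    intro C; rw [← Finset.sum_mul, hlamsum, one_mul]
  have hMv : ∀ {p : ℕ} (M : Matrix (Fin p) (Fin n) ℝ),
      M.mulVec s = ∑ j, lam j • M.mulVec (sv j) := by
    intro p M
    rw [← hrepr]
    simp only [← Matrix.mulVecLin_apply, map_sum, _root_.map_smul]
  have hMvi : ∀ (M : Matrix (Fin n) (Fin n) ℝ) (i : Fin n),
      ∑ j, lam j * M.mulVec (sv j) i = M.mulVec s i := by
    intro M i
    have h := congrFun (hMv M) i
    simpa [Finset.sum_apply] using h.symm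
  -- the vertex points in the product space
  have hVsum : ∑ j, lam j • ((x₀ + sv j, u₀ + K.mulVec (sv j) + c) :
      (Fin n → ℝ) × (Fin m → ℝ)) = (x₀ + s, u₀ + K.mulVec s + c) := by
    have h1 : ∑ j, lam j • (x₀ + sv j) = x₀ + s := by
      calc ∑ j, lam j • (x₀ + sv j)
          = ∑ j, (lam j • x₀ + lam j • sv j) := by simp [smul_add]
        _ = (∑ j, lam j) • x₀ + ∑ j, lam j • sv j := by
            rw [Finset.sum_add_distrib, Finset.sum_smul]
        _ = x₀ + s := by rw [hlamsum, one_smul, hrepr]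
    have h2 : ∑ j, lam j • (u₀ + K.mulVec (sv j) + c) = u₀ + K.mulVec s + c := by
      calc ∑ j, lam j • (u₀ + K.mulVec (sv j) + c)
          = ∑ j, (lam j • (u₀ + c) + lam j • K.mulVec (sv j)) := by
            refine Finset.sum_congr rfl fun j _ => ?_
            rw [← smul_add]
            congr 1
            abel
        _ = (∑ j, lam j) • (u₀ + c) + ∑ j, lam j • K.mulVec (sv j) := by
            rw [Finset.sum_add_distrib, Finset.sum_smul]
        _ = u₀ + K.mulVec s + c := by rw [hlamsum, one_smul, ← hMv K]; abel
    apply Prod.ext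
    · rw [Prod.fst_sum]
      simpa using h1
    · rw [Prod.snd_sum]
      simpa using h2
  -- Jensen for the components
  have jens : ∀ (f : (Fin n → ℝ) × (Fin m → ℝ) → Fin n → ℝ)
      (hc : ∀ i, ConvexOn ℝ Set.univ fun p => f p i) (i : Fin n),
      f (x₀ + s, u₀ + K.mulVec s + c) i
        ≤ ∑ j, lam j * f (x₀ + sv j, u₀ + K.mulVec (sv j) + c) i := by
    intro f hc i
    have h := (hc i).map_sum_le (fun j _ => hlamnn j) hlamsum
      (fun j _ => Set.mem_univ ((x₀ + sv j, u₀ + K.mulVec (sv j) + c) :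
        (Fin n → ℝ) × (Fin m → ℝ)))
    rwa [hVsum] at h
  -- linearization lower bound
  have lin : ∀ (f : (Fin n → ℝ) × (Fin m → ℝ) → Fin n → ℝ)
      (Df : ((Fin n → ℝ) × (Fin m → ℝ)) →L[ℝ] (Fin n → ℝ)),
      HasFDerivAt f Df (x₀, u₀) →
      (∀ i, ConvexOn ℝ Set.univ fun p => f p i) →
      ∀ i, f (x₀, u₀) i + Df (s, K.mulVec s + c) i
        ≤ f (x₀ + s, u₀ + K.mulVec s + c) i := by
    intro f Df hDf hc i
    have hDi : HasFDerivAt (fun p => f p i)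
        ((ContinuousLinearMap.proj (R := ℝ) (φ := fun _ : Fin n => ℝ) i).comp Df)
        (x₀, u₀) := by
      have h := (ContinuousLinearMap.proj (R := ℝ)
        (φ := fun _ : Fin n => ℝ) i).hasFDerivAt.comp (x₀, u₀) hDf
      have he : (⇑(ContinuousLinearMap.proj (R := ℝ) (φ := fun _ : Fin n => ℝ) i) ∘ f)
          = fun p => f p i := rfl
      rwa [he] at h
    have h := convexOn_linearization (hc i) hDi (x₀ + s, u₀ + K.mulVec s + c)
    have hpt : ((x₀ + s, u₀ + K.mulVec s + c) : (Fin n → ℝ) × (Fin m → ℝ)) - (x₀, u₀)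
        = (s, K.mulVec s + c) := by
      have h1 : ((x₀ + s, u₀ + K.mulVec s + c) : (Fin n → ℝ) × (Fin m → ℝ)) - (x₀, u₀)
          = (x₀ + s - x₀, u₀ + K.mulVec s + c - u₀) := rfl
      rw [h1]
      simp only [Prod.mk.injEq]
      constructor <;> abel
    rw [hpt] at h
    simpa using h
  -- matrix algebra identities
  have hmat : ∀ (A : Matrix (Fin n) (Fin n) ℝ) (B : Matrix (Fin n) (Fin m) ℝ)
      (z : Fin n → ℝ),
      A.mulVec z + B.mulVec (K.mulVec z + c) = (A + B * K).mulVec z + B.mulVec c := by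
    intro A B z
    rw [Matrix.add_mulVec, Matrix.mulVec_add, ← Matrix.mulVec_mulVec]
    abel
  constructor
  · -- componentwise bound
    intro i
    simp only [Pi.add_apply, Pi.sub_apply, Pi.smul_apply, Pi.neg_apply, smul_eq_mul]
    have hlin₁ := lin f₁ D₁ hD₁ hconv₁ i
    rw [hAB₁] at hlin₁
    have hmat₁ := congrFun (hmat A₁ B₁ s) i
    simp only [Pi.add_apply] at hmat₁ hlin₁
    have hJ := jens f₂ hconv₂ i
    -- expand the vertex sum
    have hexpand : ∑ j, lam j *
        ((-(sv j) + δ • (f₂ (x₀ + sv j, u₀ + K.mulVec (sv j) + c) - f₂ (x₀, u₀))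
          - δ • ((A₁ + B₁ * K).mulVec (sv j)) - δ • (B₁.mulVec c) - δ • wmin) i)
        = δ * (∑ j, lam j * f₂ (x₀ + sv j, u₀ + K.mulVec (sv j) + c) i)
          + (-(s i) - δ * f₂ (x₀, u₀) i - δ * ((A₁ + B₁ * K).mulVec s) i
            - δ * (B₁.mulVec c) i - δ * wmin i) := by
      have hj : ∀ j, lam j *
          ((-(sv j) + δ • (f₂ (x₀ + sv j, u₀ + K.mulVec (sv j) + c) - f₂ (x₀, u₀))
            - δ • ((A₁ + B₁ * K).mulVec (sv j)) - δ • (B₁.mulVec c) - δ • wmin) i)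
          = δ * (lam j * f₂ (x₀ + sv j, u₀ + K.mulVec (sv j) + c) i)
            + (-(lam j * sv j i))
            + (-(δ * (lam j * ((A₁ + B₁ * K).mulVec (sv j)) i)))
            + lam j * (-δ * f₂ (x₀, u₀) i - δ * (B₁.mulVec c) i - δ * wmin i) := by
        intro j
        simp only [Pi.add_apply, Pi.sub_apply, Pi.smul_apply, Pi.neg_apply, smul_eq_mul]
        ring
      rw [Finset.sum_congr rfl fun j _ => hj j]
      rw [Finset.sum_add_distrib, Finset.sum_add_distrib, Finset.sum_add_distrib]
      have e1 : ∑ j, δ * (lam j * f₂ (x₀ + sv j, u₀ + K.mulVec (sv j) + c) i)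
          = δ * ∑ j, lam j * f₂ (x₀ + sv j, u₀ + K.mulVec (sv j) + c) i :=
        (Finset.mul_sum _ _ _).symm
      have e2 : ∑ j, -(lam j * sv j i) = -(s i) := by
        rw [Finset.sum_neg_distrib, happ]
      have e3 : ∑ j, -(δ * (lam j * ((A₁ + B₁ * K).mulVec (sv j)) i))
          = -(δ * ((A₁ + B₁ * K).mulVec s) i) := by
        rw [Finset.sum_neg_distrib, ← Finset.mul_sum, hMvi]
      have e4 := hconstsum (-δ * f₂ (x₀, u₀) i - δ * (B₁.mulVec c) i - δ * wmin i)
      rw [e1, e2, e3, e4]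
      ring
    have hα'i : ∀ j, lam j *
        ((-(sv j) + δ • (f₂ (x₀ + sv j, u₀ + K.mulVec (sv j) + c) - f₂ (x₀, u₀))
          - δ • ((A₁ + B₁ * K).mulVec (sv j)) - δ • (B₁.mulVec c) - δ • wmin) i)
        ≤ lam j * α' i := fun j =>
      mul_le_mul_of_nonneg_left (hα' j i) (hlamnn j)
    have hsumle : ∑ j, lam j *
        ((-(sv j) + δ • (f₂ (x₀ + sv j, u₀ + K.mulVec (sv j) + c) - f₂ (x₀, u₀))
          - δ • ((A₁ + B₁ * K).mulVec (sv j)) - δ • (B₁.mulVec c) - δ • wmin) i)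
        ≤ α' i := by
      refine le_trans (Finset.sum_le_sum fun j _ => hα'i j) ?_
      rw [hconstsum]
    have h1 : ((A₁ + B₁ * K).mulVec s) i + (B₁.mulVec c) i
        ≤ f₁ (x₀ + s, u₀ + K.mulVec s + c) i - f₁ (x₀, u₀) i := by linarith
    have h2 := mul_le_mul_of_nonneg_left hJ hδ.le
    have h3 := hw1 i
    rw [hexpand] at hsumle
    have h1' := mul_le_mul_of_nonneg_left h1 hδ.le
    have h3' := mul_le_mul_of_nonneg_left h3 hδ.le
    linarith
  · -- sum bound
    have hlin₂ : ∀ i, f₂ (x₀, u₀) i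
        + (((A₂ + B₂ * K).mulVec s) i + (B₂.mulVec c) i)
        ≤ f₂ (x₀ + s, u₀ + K.mulVec s + c) i := by
      intro i
      have h := lin f₂ D₂ hD₂ hconv₂ i
      rw [hAB₂] at h
      have hm := congrFun (hmat A₂ B₂ s) i
      simp only [Pi.add_apply] at hm h
      linarith
    -- expand the vertex sums for hβ'
    have hQ : ∀ j, (∑ i, (sv j
        + δ • (f₁ (x₀ + sv j, u₀ + K.mulVec (sv j) + c) - f₁ (x₀, u₀))
        - δ • ((A₂ + B₂ * K).mulVec (sv j)) - δ • (B₂.mulVec c)) i)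
        = (∑ i, sv j i) + δ * (∑ i, f₁ (x₀ + sv j, u₀ + K.mulVec (sv j) + c) i)
          - δ * (∑ i, f₁ (x₀, u₀) i) - δ * (∑ i, ((A₂ + B₂ * K).mulVec (sv j)) i)
          - δ * (∑ i, (B₂.mulVec c) i) := by
      intro j
      simp only [Pi.add_apply, Pi.sub_apply, Pi.smul_apply, smul_eq_mul, mul_sub,
        Finset.sum_add_distrib, Finset.sum_sub_distrib, Finset.mul_sum]
      ring
    have hsv_sum : ∑ j, lam j * (∑ i, sv j i) = ∑ i, s i := by
      simp only [Finset.mul_sum]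
      rw [Finset.sum_comm]
      exact Finset.sum_congr rfl fun i _ => happ i
    have hM_sum : ∑ j, lam j * (∑ i, ((A₂ + B₂ * K).mulVec (sv j)) i)
        = ∑ i, ((A₂ + B₂ * K).mulVec s) i := by
      simp only [Finset.mul_sum]
      rw [Finset.sum_comm]
      exact Finset.sum_congr rfl fun i _ => hMvi _ i
    have hJsum : ∑ i, f₁ (x₀ + s, u₀ + K.mulVec s + c) i
        ≤ ∑ j, lam j * (∑ i, f₁ (x₀ + sv j, u₀ + K.mulVec (sv j) + c) i) := by
      refine le_trans (Finset.sum_le_sum fun i _ => jens f₁ hconv₁ i) ?_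
      simp only [Finset.mul_sum]
      rw [Finset.sum_comm]
    have hfinal : ∑ j, lam j * ((∑ i, (sv j
        + δ • (f₁ (x₀ + sv j, u₀ + K.mulVec (sv j) + c) - f₁ (x₀, u₀))
        - δ • ((A₂ + B₂ * K).mulVec (sv j)) - δ • (B₂.mulVec c)) i) + δ * wbar) ≤ β' := by
      refine le_trans (Finset.sum_le_sum fun j _ =>
        mul_le_mul_of_nonneg_left (hβ' j) (hlamnn j)) ?_
      rw [hconstsum]
    have hexp2 : ∑ j, lam j * ((∑ i, (sv j
        + δ • (f₁ (x₀ + sv j, u₀ + K.mulVec (sv j) + c) - f₁ (x₀, u₀))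
        - δ • ((A₂ + B₂ * K).mulVec (sv j)) - δ • (B₂.mulVec c)) i) + δ * wbar)
        = (∑ i, s i)
          + δ * (∑ j, lam j * (∑ i, f₁ (x₀ + sv j, u₀ + K.mulVec (sv j) + c) i))
          - δ * (∑ i, f₁ (x₀, u₀) i) - δ * (∑ i, ((A₂ + B₂ * K).mulVec s) i)
          - δ * (∑ i, (B₂.mulVec c) i) + δ * wbar := by
      have hj : ∀ j, lam j * ((∑ i, (sv j
          + δ • (f₁ (x₀ + sv j, u₀ + K.mulVec (sv j) + c) - f₁ (x₀, u₀))
          - δ • ((A₂ + B₂ * K).mulVec (sv j)) - δ • (B₂.mulVec c)) i) + δ * wbar)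
          = lam j * (∑ i, sv j i)
            + δ * (lam j * (∑ i, f₁ (x₀ + sv j, u₀ + K.mulVec (sv j) + c) i))
            + (-(δ * (lam j * (∑ i, ((A₂ + B₂ * K).mulVec (sv j)) i))))
            + lam j * (-(δ * (∑ i, f₁ (x₀, u₀) i)) - δ * (∑ i, (B₂.mulVec c) i)
              + δ * wbar) := by
        intro j
        rw [hQ j]
        ring
      rw [Finset.sum_congr rfl fun j _ => hj j]
      rw [Finset.sum_add_distrib, Finset.sum_add_distrib, Finset.sum_add_distrib]
      have e1 : ∑ j, δ * (lam j * (∑ i, f₁ (x₀ + sv j, u₀ + K.mulVec (sv j) + c) i))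
          = δ * ∑ j, lam j * (∑ i, f₁ (x₀ + sv j, u₀ + K.mulVec (sv j) + c) i) :=
        (Finset.mul_sum _ _ _).symm
      have e3 : ∑ j, -(δ * (lam j * (∑ i, ((A₂ + B₂ * K).mulVec (sv j)) i)))
          = -(δ * (∑ i, ((A₂ + B₂ * K).mulVec s) i)) := by
        rw [Finset.sum_neg_distrib, ← Finset.mul_sum, hM_sum]
      have e4 := hconstsum (-(δ * (∑ i, f₁ (x₀, u₀) i)) - δ * (∑ i, (B₂.mulVec c) i)
        + δ * wbar)
      rw [e1, e3, e4, hsv_sum]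
      ring
    have hgoal_eq : ∑ i, (s + δ • (f₁ (x₀ + s, u₀ + K.mulVec s + c) - f₁ (x₀, u₀))
        - δ • (f₂ (x₀ + s, u₀ + K.mulVec s + c) - f₂ (x₀, u₀)) + δ • w) i
        = (∑ i, s i) + δ * (∑ i, f₁ (x₀ + s, u₀ + K.mulVec s + c) i)
          - δ * (∑ i, f₁ (x₀, u₀) i) - δ * (∑ i, f₂ (x₀ + s, u₀ + K.mulVec s + c) i)
          + δ * (∑ i, f₂ (x₀, u₀) i) + δ * (∑ i, w i) := by
      simp only [Pi.add_apply, Pi.sub_apply, Pi.smul_apply, smul_eq_mul, mul_sub,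
        Finset.sum_add_distrib, Finset.sum_sub_distrib, Finset.mul_sum]
      ring
    have hlin₂sum : (∑ i, f₂ (x₀, u₀) i) + ((∑ i, ((A₂ + B₂ * K).mulVec s) i)
        + (∑ i, (B₂.mulVec c) i)) ≤ ∑ i, f₂ (x₀ + s, u₀ + K.mulVec s + c) i := by
      have h := Finset.sum_le_sum fun i (_ : i ∈ Finset.univ) => hlin₂ i
      simpa [Finset.sum_add_distrib] using h
    rw [hexp2] at hfinal
    rw [hgoal_eq]
    have hb1 := mul_le_mul_of_nonneg_left hJsum hδ.le
    have hb2 := mul_le_mul_of_nonneg_left hlin₂sum hδ.le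
    have hb3 := mul_le_mul_of_nonneg_left hw2 hδ.le
    linarith
end

section
/- Let f_1, f_2 : ℝ^n × ℝ^m → ℝ^n and g_1, g_2 : ℝ^n × ℝ^m → ℝ^p be componentwise convex and differentiable at (x°, u°), with Jacobians A_i = ∂f_i/∂x, B_i = ∂f_i/∂u, A^g_i = ∂g_i/∂x, B^g_i = ∂g_i/∂u evaluated at (x°,u°), for i = 1,2. Let δ > 0, K an m×n matrix, c ∈ ℝ^m, and let e ∈ ℝ^n have nonnegative components. Let α ∈ ℝ^n, β ∈ ℝ with β + 1ᵀα ≥ 0, with simplex vertices s⁰,…,sⁿ, and let θ¹,…,θᴹ ∈ ℝ^p. Let W ⊆ ℝ^n, w_min ∈ ℝ^n, w̄ ∈ ℝ with w ≥ w_min componentwise and 1ᵀw ≤ w̄ for all w ∈ W. For i = 1,2 and s ∈ ℝ^n write Δf_i(s) = f_i(x°+s, u°+Ks+c) − f_i(x°,u°), Δg_i(s) = g_i(x°+s, u°+Ks+c) − g_i(x°,u°), and F_i = δ(A_i + B_i K), G_i = δ(A^g_i + B^g_i K). Suppose α⁺ ∈ ℝ^n and β⁺ ∈ ℝ satisfy,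 for every j ∈ {0,…,n} and every m ∈ {1,…,M}: (i) α⁺ ≥ −sʲ + δΔf_2(sʲ) − F_1 sʲ − δB_1 c + e[ θᵐ₊ᵀ(δΔg_2(sʲ) − G_1 sʲ − δB^g_1 c) − θᵐ₋ᵀ(δΔg_1(sʲ) − G_2 sʲ − δB^g_2 c) ] − δ w_min componentwise, and (ii) β⁺ ≥ 1ᵀ( sʲ + δΔf_1(sʲ) − F_2 sʲ − δB_2 c ) + (1ᵀe)[ θᵐ₊ᵀ(δΔg_1(sʲ) − G_2 sʲ − δB^g_2 c) − θᵐ₋ᵀ(δΔg_2(sʲ) − G_1 sʲ − δB^g_1 c) ] + δ w̄, where θᵐ₊, θᵐ₋ denote the componentwise nonnegative and nonpositive parts of θᵐ. Then for every s ∈ S(α,β), every θ in the convex hull of {θ¹,…,θᴹ}, and every w ∈ W, the updated perturbation s⁺ = s + δ(Δf_1(s) − Δf_2(s)) + δ e (Δg_1(s) − Δg_2(s))ᵀθ + δw belongs to S(α⁺, β⁺), i.e. −s⁺ ≤ α⁺ componentwise and 1ᵀs⁺ ≤ β⁺. -/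
open Matrix

private lemma convex_tangent_le' {E : Type*} [NormedAddCommGroup E] [NormedSpace ℝ E]
    {φ : E → ℝ} {D : E →L[ℝ] ℝ} {q₀ : E}
    (hφ : ConvexOn ℝ Set.univ φ) (hD : HasFDerivAt φ D q₀) (q : E) :
    φ q₀ + D (q - q₀) ≤ φ q := by
  set v := q - q₀ with hv
  have hpath : HasDerivAt (fun t : ℝ => q₀ + t • v) v 0 := by
    simpa using ((hasDerivAt_id (0:ℝ)).smul_const v).const_add q₀
  have hψ : HasDerivAt (fun t : ℝ => φ (q₀ + t • v)) (D v) 0 := by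
    have hD' : HasFDerivAt φ D ((fun t : ℝ => q₀ + t • v) 0) := by simpa using hD
    exact hD'.comp_hasDerivAt 0 hpath
  have hslope : Filter.Tendsto (slope (fun t : ℝ => φ (q₀ + t • v)) 0)
      (nhdsWithin 0 (Set.Ioi 0)) (nhds (D v)) :=
    (hasDerivAt_iff_tendsto_slope.mp hψ).mono_left
      (nhdsWithin_mono 0 (fun x hx => ne_of_gt hx))
  have hbound : ∀ᶠ t in nhdsWithin (0:ℝ) (Set.Ioi 0),
      slope (fun t : ℝ => φ (q₀ + t • v)) 0 t ≤ φ q - φ q₀ := by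
    filter_upwards [Ioc_mem_nhdsGT_of_mem (by simp : (0:ℝ) ∈ Set.Ico (0:ℝ) 1)] with t ht
    have ht0 : 0 < t := ht.1
    have key : φ (q₀ + t • v) ≤ (1 - t) * φ q₀ + t * φ q := by
      have := hφ.2 (Set.mem_univ q₀) (Set.mem_univ q) (by linarith [ht.2] : (0:ℝ) ≤ 1 - t)
        (le_of_lt ht0) (by ring)
      have harg : (1 - t) • q₀ + t • q = q₀ + t • v := by
        rw [hv]; module
      rw [harg] at this
      simpa [smul_eq_mul] using this
    rw [slope_def_field]
    have : (φ (q₀ + t • v) - φ (q₀ + (0:ℝ) • v)) / (t - 0) ≤ φ q - φ q₀ := by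
      rw [div_le_iff₀ (by simpa using ht0)]
      simp only [zero_smul, add_zero, sub_zero]
      nlinarith [key]
    simpa using this
  have := le_of_tendsto hslope hbound
  linarith

private lemma convexHull_range_rep' {M p : ℕ} (θv : Fin M → Fin p → ℝ)
    {θ : Fin p → ℝ} (hθ : θ ∈ convexHull ℝ (Set.range θv)) :
    ∃ μ : Fin M → ℝ, (∀ r, 0 ≤ μ r) ∧ ∑ r, μ r = 1 ∧ θ = ∑ r, μ r • θv r := by
  have hsub : convexHull ℝ (Set.range θv) ⊆
      {x | ∃ μ : Fin M → ℝ, (∀ r, 0 ≤ μ r) ∧ ∑ r, μ r = 1 ∧ x = ∑ r, μ r • θv r} := by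
    apply convexHull_min
    · rintro x ⟨r, rfl⟩
      exact ⟨fun r' => if r' = r then 1 else 0,
        fun r' => by dsimp only; split <;> norm_num, by simp, by simp⟩
    · rintro x ⟨μ, hμ0, hμ1, rfl⟩ y ⟨ν, hν0, hν1, rfl⟩ a b ha hb hab
      refine ⟨fun r => a * μ r + b * ν r,
        fun r => add_nonneg (mul_nonneg ha (hμ0 r)) (mul_nonneg hb (hν0 r)), ?_, ?_⟩
      · rw [Finset.sum_add_distrib, ← Finset.mul_sum, ← Finset.mul_sum, hμ1, hν1,
          mul_one, mul_one]; exact hab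
      · rw [Finset.smul_sum, Finset.smul_sum, ← Finset.sum_add_distrib]
        refine Finset.sum_congr rfl fun r _ => ?_
        rw [smul_smul, smul_smul, add_smul]
  exact hsub hθ

private lemma simplex_rep' {n : ℕ} (α : Fin n → ℝ) (β : ℝ) (hαβ : 0 ≤ β + ∑ i, α i)
    {s : Fin n → ℝ} (hs : s ∈ simplexSet α β) :
    ∃ lam : Fin (n+1) → ℝ, (∀ j, 0 ≤ lam j) ∧ ∑ j, lam j = 1 ∧
      s = ∑ j, lam j • simplexVertex α β j := by
  obtain ⟨hs1, hs2⟩ := hs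
  set d : ℝ := β + ∑ i, α i with hd
  have hkey : ∀ lam : Fin (n+1) → ℝ, ∑ j, lam j = 1 →
      ∑ j, lam j • simplexVertex α β j
        = -α + ∑ j : Fin n, (lam j.succ * d) • (Pi.single j 1 : Fin n → ℝ) := by
    intro lam hsum
    rw [Fin.sum_univ_succ]
    simp only [simplexVertex, Fin.cases_zero, Fin.cases_succ]
    have : ∀ j : Fin n, lam j.succ • (-α + d • (Pi.single j 1 : Fin n → ℝ))
        = lam j.succ • (-α) + (lam j.succ * d) • (Pi.single j 1 : Fin n → ℝ) := by
      intro j; rw [smul_add, mul_smul]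
    rw [Finset.sum_congr rfl fun j _ => this j, Finset.sum_add_distrib,
      ← add_assoc, ← Finset.sum_smul]
    have : lam 0 • (-α) + (∑ j : Fin n, lam j.succ) • (-α) = -α := by
      rw [← add_smul]
      have : lam 0 + ∑ j : Fin n, lam j.succ = 1 := by
        rw [← Fin.sum_univ_succ]; exact hsum
      rw [this, one_smul]
    rw [this]
  rcases eq_or_lt_of_le hαβ with hd0 | hdpos
  · have hseq : s = -α := by
      have hsum0 : ∑ i, (s i + α i) = 0 := by
        have h1 : ∑ i, (s i + α i) ≤ 0 := by
          rw [Finset.sum_add_distrib]; linarith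
        have h2 : 0 ≤ ∑ i, (s i + α i) :=
          Finset.sum_nonneg fun i _ => by linarith [hs1 i]
        linarith
      have := (Finset.sum_eq_zero_iff_of_nonneg
        (fun i _ => by linarith [hs1 i] : ∀ i ∈ Finset.univ, 0 ≤ s i + α i)).mp hsum0
      funext i
      have := this i (Finset.mem_univ i)
      simp only [Pi.neg_apply]; linarith
    refine ⟨Fin.cases 1 (fun _ => 0), fun j => ?_,
      by rw [Fin.sum_univ_succ]; simp, ?_⟩
    · induction j using Fin.cases <;> norm_num
    · rw [hkey _ (by rw [Fin.sum_univ_succ]; simp)]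
      simp [hseq]
  · refine ⟨Fin.cases (1 - (∑ i, (s i + α i)) / d) (fun j => (s j + α j) / d),
      fun j => ?_, ?_, ?_⟩
    · induction j using Fin.cases with
      | zero =>
        simp only [Fin.cases_zero, sub_nonneg]
        rw [div_le_one hdpos]
        rw [Finset.sum_add_distrib]; linarith
      | succ j =>
        simp only [Fin.cases_succ]
        exact div_nonneg (by linarith [hs1 j]) hdpos.le
    · rw [Fin.sum_univ_succ]
      simp only [Fin.cases_zero, Fin.cases_succ]
      rw [← Finset.sum_div]
      ring
    · rw [hkey _ ?hsum]
      case hsum =>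
        rw [Fin.sum_univ_succ]
        simp only [Fin.cases_zero, Fin.cases_succ]
        rw [← Finset.sum_div]; ring
      funext i
      simp only [Fin.cases_succ, Pi.add_apply, Pi.neg_apply, Finset.sum_apply,
        Pi.smul_apply, smul_eq_mul]
      rw [Finset.sum_eq_single i (fun j _ hj => by
          simp [Pi.single_apply, hj.symm]) (by simp)]
      rw [Pi.single_eq_same, div_mul_eq_mul_div, mul_one, mul_div_assoc,
        div_self hdpos.ne', mul_one]
      ring

private lemma scalar_key (δ a b P₁ P₂ g₁s c₁ g₂s c₂ p q th : ℝ)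
    (hδ : 0 < δ) (hp : 0 ≤ p) (hq : q ≤ 0) (hpq : p + q = th)
    (hta : g₁s + c₁ ≤ a) (haP : a ≤ P₁) (htb : g₂s + c₂ ≤ b) (hbP : b ≤ P₂) :
    -(δ * ((a - b) * th)) ≤ p * (δ * P₂ - δ * g₁s - δ * c₁) - q * (δ * P₁ - δ * g₂s - δ * c₂) := by
  have h1 : p * b ≤ p * P₂ := mul_le_mul_of_nonneg_left hbP hp
  have h2 : p * g₁s + p * c₁ ≤ p * a := by
    have := mul_le_mul_of_nonneg_left hta hp
    nlinarith [this]
  have h3 : q * b ≤ q * g₂s + q * c₂ := by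
    have := mul_le_mul_of_nonpos_left htb hq
    nlinarith [this]
  have h4 : q * P₁ ≤ q * a := mul_le_mul_of_nonpos_left haP hq
  have hsum : (b - a) * (p + q) ≤ p * P₂ - p * g₁s - p * c₁ - (q * P₁ - q * g₂s - q * c₂) := by
    nlinarith [h1, h2, h3, h4]
  have hfin := mul_le_mul_of_nonneg_left hsum hδ.le
  rw [← hpq]
  nlinarith [hfin]

private lemma scalar_key' (δ a b P₁ P₂ g₁s c₁ g₂s c₂ p q th : ℝ)
    (hδ : 0 < δ) (hp : 0 ≤ p) (hq : q ≤ 0) (hpq : p + q = th)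
    (hta : g₁s + c₁ ≤ a) (haP : a ≤ P₁) (htb : g₂s + c₂ ≤ b) (hbP : b ≤ P₂) :
    δ * ((a - b) * th) ≤ p * (δ * P₁ - δ * g₂s - δ * c₂) - q * (δ * P₂ - δ * g₁s - δ * c₁) := by
  have := scalar_key δ b a P₂ P₁ g₂s c₂ g₁s c₁ p q th hδ hp hq hpq htb hbP hta haP
  nlinarith [this]

set_option maxHeartbeats 2000000 in
/-- One-step tube propagation for the robust adaptive DC-TMPC
algorithm under parameter uncertainty `θ ∈ conv{θ¹,…,θᴹ}`.  If `α⁺, β⁺`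
satisfy the vertex inequalities (i) and (ii) for every simplex vertex `sʲ`
and every parameter vertex `θᵐ`, then for every `s ∈ S(α,β)`, every `θ` in
the convex hull of `{θ¹,…,θᴹ}` and every `w ∈ W`, the updated perturbation
`s⁺ = s + δ(Δf₁(s) − Δf₂(s)) + δ e (Δg₁(s) − Δg₂(s))ᵀθ + δw`
belongs to `S(α⁺,β⁺)`, where `Δfᵢ(s) = fᵢ(x₀+s,u₀+Ks+c) − fᵢ(x₀,u₀)` and
`Δgᵢ(s) = gᵢ(x₀+s,u₀+Ks+c) − gᵢ(x₀,u₀)`. -/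
theorem adaptive_dc_tmpc_tube_propagation
    {n m p M : ℕ}
    (f₁ f₂ : (Fin n → ℝ) × (Fin m → ℝ) → (Fin n → ℝ))
    (g₁ g₂ : (Fin n → ℝ) × (Fin m → ℝ) → (Fin p → ℝ))
    (hconvf₁ : ∀ i, ConvexOn ℝ Set.univ (fun q => f₁ q i))
    (hconvf₂ : ∀ i, ConvexOn ℝ Set.univ (fun q => f₂ q i))
    (hconvg₁ : ∀ i, ConvexOn ℝ Set.univ (fun q => g₁ q i))
    (hconvg₂ : ∀ i, ConvexOn ℝ Set.univ (fun q => g₂ q i))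
    (x₀ : Fin n → ℝ) (u₀ : Fin m → ℝ)
    (Df₁ Df₂ : ((Fin n → ℝ) × (Fin m → ℝ)) →L[ℝ] (Fin n → ℝ))
    (Dg₁ Dg₂ : ((Fin n → ℝ) × (Fin m → ℝ)) →L[ℝ] (Fin p → ℝ))
    (hDf₁ : HasFDerivAt f₁ Df₁ (x₀, u₀)) (hDf₂ : HasFDerivAt f₂ Df₂ (x₀, u₀))
    (hDg₁ : HasFDerivAt g₁ Dg₁ (x₀, u₀)) (hDg₂ : HasFDerivAt g₂ Dg₂ (x₀, u₀))
    (A₁ A₂ : Matrix (Fin n) (Fin n) ℝ) (B₁ B₂ : Matrix (Fin n) (Fin m) ℝ)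
    (Ag₁ Ag₂ : Matrix (Fin p) (Fin n) ℝ) (Bg₁ Bg₂ : Matrix (Fin p) (Fin m) ℝ)
    (hABf₁ : ∀ sv : (Fin n → ℝ) × (Fin m → ℝ),
      Df₁ sv = A₁.mulVec sv.1 + B₁.mulVec sv.2)
    (hABf₂ : ∀ sv : (Fin n → ℝ) × (Fin m → ℝ),
      Df₂ sv = A₂.mulVec sv.1 + B₂.mulVec sv.2)
    (hABg₁ : ∀ sv : (Fin n → ℝ) × (Fin m → ℝ),
      Dg₁ sv = Ag₁.mulVec sv.1 + Bg₁.mulVec sv.2)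
    (hABg₂ : ∀ sv : (Fin n → ℝ) × (Fin m → ℝ),
      Dg₂ sv = Ag₂.mulVec sv.1 + Bg₂.mulVec sv.2)
    (δ : ℝ) (hδ : 0 < δ)
    (K : Matrix (Fin m) (Fin n) ℝ) (c : Fin m → ℝ)
    (e : Fin n → ℝ) (he : ∀ i, 0 ≤ e i)
    (α : Fin n → ℝ) (β : ℝ) (hαβ : 0 ≤ β + ∑ i, α i)
    (θv : Fin M → Fin p → ℝ)
    (W : Set (Fin n → ℝ)) (wmin : Fin n → ℝ) (wbar : ℝ)
    (hW : ∀ w ∈ W, (∀ i, wmin i ≤ w i) ∧ ∑ i, w i ≤ wbar)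
    (α' : Fin n → ℝ) (β' : ℝ)
    (hα' : ∀ (j : Fin (n + 1)) (r : Fin M) (i : Fin n),
      (-(simplexVertex α β j)
        + δ • (f₂ (x₀ + simplexVertex α β j,
                   u₀ + K.mulVec (simplexVertex α β j) + c) - f₂ (x₀, u₀))
        - δ • ((A₁ + B₁ * K).mulVec (simplexVertex α β j))
        - δ • (B₁.mulVec c)) i
      + e i *
        ((fun l => max (θv r l) 0) ⬝ᵥ
            (δ • (g₂ (x₀ + simplexVertex α β j,
                      u₀ + K.mulVec (simplexVertex α β j) + c) - g₂ (x₀, u₀))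
              - δ • ((Ag₁ + Bg₁ * K).mulVec (simplexVertex α β j))
              - δ • (Bg₁.mulVec c))
          - (fun l => min (θv r l) 0) ⬝ᵥ
            (δ • (g₁ (x₀ + simplexVertex α β j,
                      u₀ + K.mulVec (simplexVertex α β j) + c) - g₁ (x₀, u₀))
              - δ • ((Ag₂ + Bg₂ * K).mulVec (simplexVertex α β j))
              - δ • (Bg₂.mulVec c)))
      - δ * wmin i ≤ α' i)
    (hβ' : ∀ (j : Fin (n + 1)) (r : Fin M),
      (∑ i, (simplexVertex α β j
        + δ • (f₁ (x₀ + simplexVertex α β j,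
                   u₀ + K.mulVec (simplexVertex α β j) + c) - f₁ (x₀, u₀))
        - δ • ((A₂ + B₂ * K).mulVec (simplexVertex α β j))
        - δ • (B₂.mulVec c)) i)
      + (∑ i, e i) *
        ((fun l => max (θv r l) 0) ⬝ᵥ
            (δ • (g₁ (x₀ + simplexVertex α β j,
                      u₀ + K.mulVec (simplexVertex α β j) + c) - g₁ (x₀, u₀))
              - δ • ((Ag₂ + Bg₂ * K).mulVec (simplexVertex α β j))
              - δ • (Bg₂.mulVec c))
          - (fun l => min (θv r l) 0) ⬝ᵥ
            (δ • (g₂ (x₀ + simplexVertex α β j,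
                      u₀ + K.mulVec (simplexVertex α β j) + c) - g₂ (x₀, u₀))
              - δ • ((Ag₁ + Bg₁ * K).mulVec (simplexVertex α β j))
              - δ • (Bg₁.mulVec c)))
      + δ * wbar ≤ β') :
    ∀ s ∈ simplexSet α β, ∀ θ ∈ convexHull ℝ (Set.range θv), ∀ w ∈ W,
      s + δ • (f₁ (x₀ + s, u₀ + K.mulVec s + c) - f₁ (x₀, u₀))
        - δ • (f₂ (x₀ + s, u₀ + K.mulVec s + c) - f₂ (x₀, u₀))
        + (δ * (((g₁ (x₀ + s, u₀ + K.mulVec s + c) - g₁ (x₀, u₀))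
                 - (g₂ (x₀ + s, u₀ + K.mulVec s + c) - g₂ (x₀, u₀))) ⬝ᵥ θ)) • e
        + δ • w ∈ simplexSet α' β' := by
  intro s hs θ hθ w hw
  obtain ⟨lam, hlam0, hlam1, hsV⟩ := simplex_rep' α β hαβ hs
  obtain ⟨mu, hmu0, hmu1, hθv⟩ := convexHull_range_rep' θv hθ
  obtain ⟨hwmin, hwbar⟩ := hW w hw
  set V := simplexVertex α β with hV
  set F₁ := A₁ + B₁ * K with hF₁
  set F₂ := A₂ + B₂ * K with hF₂
  set G₁ := Ag₁ + Bg₁ * K with hG₁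
  set G₂ := Ag₂ + Bg₂ * K with hG₂
  set bc₁ := B₁.mulVec c with hbc₁
  set bc₂ := B₂.mulVec c with hbc₂
  set gc₁ := Bg₁.mulVec c with hgc₁
  set gc₂ := Bg₂.mulVec c with hgc₂
  set Φ₁ : (Fin n → ℝ) → Fin n → ℝ :=
    fun t => f₁ (x₀ + t, u₀ + K.mulVec t + c) - f₁ (x₀, u₀) with hΦ₁
  set Φ₂ : (Fin n → ℝ) → Fin n → ℝ :=
    fun t => f₂ (x₀ + t, u₀ + K.mulVec t + c) - f₂ (x₀, u₀) with hΦ₂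
  set Ψ₁ : (Fin n → ℝ) → Fin p → ℝ :=
    fun t => g₁ (x₀ + t, u₀ + K.mulVec t + c) - g₁ (x₀, u₀) with hΨ₁
  set Ψ₂ : (Fin n → ℝ) → Fin p → ℝ :=
    fun t => g₂ (x₀ + t, u₀ + K.mulVec t + c) - g₂ (x₀, u₀) with hΨ₂
  set θp : Fin M → Fin p → ℝ := fun r l => max (θv r l) 0 with hθp
  set θm : Fin M → Fin p → ℝ := fun r l => min (θv r l) 0 with hθm
  -- coordinates of s as convex combination
  have hs_i : ∀ i, s i = ∑ j, lam j * V j i := by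
    intro i
    rw [hsV]
    simp [Finset.sum_apply]
  have hmulVecS : ∀ {k : ℕ} (Mx : Matrix (Fin k) (Fin n) ℝ) (i : Fin k),
      Mx.mulVec s i = ∑ j, lam j * Mx.mulVec (V j) i := by
    intro k Mx i
    have hv2 : Mx.mulVec s = ∑ j, lam j • Mx.mulVec (V j) := by
      rw [hsV, ← Matrix.mulVecLin_apply, map_sum]
      simp [Matrix.mulVecLin_apply]
    rw [hv2]
    simp [Finset.sum_apply]
  have hqpair : ((x₀ + s, u₀ + K.mulVec s + c) : (Fin n → ℝ) × (Fin m → ℝ)) =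
      ∑ j, lam j • ((x₀ + V j, u₀ + K.mulVec (V j) + c) : (Fin n → ℝ) × (Fin m → ℝ)) := by
    have hK : K.mulVec s = ∑ j, lam j • K.mulVec (V j) := by
      rw [hsV, ← Matrix.mulVecLin_apply, map_sum]
      simp [Matrix.mulVecLin_apply]
    have h1 : ∑ j, lam j • (x₀ + V j) = x₀ + s := by
      simp only [smul_add]
      rw [Finset.sum_add_distrib, ← Finset.sum_smul, hlam1, one_smul, ← hsV]
    have h2 : ∑ j, lam j • (u₀ + K.mulVec (V j) + c) = u₀ + K.mulVec s + c := by
      simp only [smul_add]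
      rw [Finset.sum_add_distrib, Finset.sum_add_distrib, ← Finset.sum_smul, hlam1,
        one_smul, ← Finset.sum_smul, hlam1, one_smul, ← hK]
    rw [Prod.ext_iff]
    constructor
    · rw [Prod.fst_sum]
      simpa using h1.symm
    · rw [Prod.snd_sum]
      simpa using h2.symm
  -- Jensen inequality (coordinatewise, in increment form)
  have hJensenD : ∀ {k : ℕ} (f : (Fin n → ℝ) × (Fin m → ℝ) → Fin k → ℝ),
      (∀ i, ConvexOn ℝ Set.univ (fun q => f q i)) → ∀ i,
      f (x₀ + s, u₀ + K.mulVec s + c) i - f (x₀, u₀) i ≤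
        ∑ j, lam j * (f (x₀ + V j, u₀ + K.mulVec (V j) + c) i - f (x₀, u₀) i) := by
    intro k f hf i
    have hJ : f (x₀ + s, u₀ + K.mulVec s + c) i ≤
        ∑ j, lam j * f (x₀ + V j, u₀ + K.mulVec (V j) + c) i := by
      rw [hqpair]
      exact (hf i).map_sum_le (fun j _ => hlam0 j) hlam1 (fun j _ => Set.mem_univ _)
    have hsplit : ∑ j, lam j * (f (x₀ + V j, u₀ + K.mulVec (V j) + c) i - f (x₀, u₀) i)
        = (∑ j, lam j * f (x₀ + V j, u₀ + K.mulVec (V j) + c) i) - f (x₀, u₀) i := by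
      rw [Finset.sum_congr rfl fun j _ => mul_sub (lam j) _ _, Finset.sum_sub_distrib,
        ← Finset.sum_mul, hlam1, one_mul]
    rw [hsplit]
    linarith [hJ]
  have hJΦ₁ : ∀ i, Φ₁ s i ≤ ∑ j, lam j * Φ₁ (V j) i := by
    intro i
    simp only [hΦ₁, Pi.sub_apply]
    exact hJensenD f₁ hconvf₁ i
  have hJΦ₂ : ∀ i, Φ₂ s i ≤ ∑ j, lam j * Φ₂ (V j) i := by
    intro i
    simp only [hΦ₂, Pi.sub_apply]
    exact hJensenD f₂ hconvf₂ i
  have hJΨ₁ : ∀ l, Ψ₁ s l ≤ ∑ j, lam j * Ψ₁ (V j) l := by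
    intro l
    simp only [hΨ₁, Pi.sub_apply]
    exact hJensenD g₁ hconvg₁ l
  have hJΨ₂ : ∀ l, Ψ₂ s l ≤ ∑ j, lam j * Ψ₂ (V j) l := by
    intro l
    simp only [hΨ₂, Pi.sub_apply]
    exact hJensenD g₂ hconvg₂ l
  -- tangent inequality
  have hTangent : ∀ {k : ℕ} (f : (Fin n → ℝ) × (Fin m → ℝ) → Fin k → ℝ)
      (Df : ((Fin n → ℝ) × (Fin m → ℝ)) →L[ℝ] (Fin k → ℝ))
      (Amat : Matrix (Fin k) (Fin n) ℝ) (Bmat : Matrix (Fin k) (Fin m) ℝ),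
      (∀ i, ConvexOn ℝ Set.univ (fun q => f q i)) →
      HasFDerivAt f Df (x₀, u₀) →
      (∀ sv : (Fin n → ℝ) × (Fin m → ℝ), Df sv = Amat.mulVec sv.1 + Bmat.mulVec sv.2) →
      ∀ i, (Amat + Bmat * K).mulVec s i + Bmat.mulVec c i ≤
        f (x₀ + s, u₀ + K.mulVec s + c) i - f (x₀, u₀) i := by
    intro k f Df Amat Bmat hconv hDf hAB i
    have hproj : HasFDerivAt (fun q => f q i)
        ((ContinuousLinearMap.proj i).comp Df) (x₀, u₀) :=
      (ContinuousLinearMap.proj (R := ℝ) (φ := fun _ : Fin k => ℝ) i).hasFDerivAt.comp _ hDf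
    have h := convex_tangent_le' (hconv i) hproj (x₀ + s, u₀ + K.mulVec s + c)
    have hsub : ((x₀ + s, u₀ + K.mulVec s + c) : (Fin n → ℝ) × (Fin m → ℝ)) - (x₀, u₀)
        = (s, K.mulVec s + c) := by
      rw [Prod.ext_iff]
      constructor
      · show x₀ + s - x₀ = s
        abel
      · show u₀ + K.mulVec s + c - u₀ = K.mulVec s + c
        abel
    rw [hsub] at h
    simp only [ContinuousLinearMap.coe_comp', Function.comp_apply,
      ContinuousLinearMap.proj_apply] at h
    rw [hAB] at h
    dsimp only at h
    simp only [Pi.add_apply] at h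
    have halg : (Amat + Bmat * K).mulVec s i + Bmat.mulVec c i
        = Amat.mulVec s i + Bmat.mulVec (K.mulVec s + c) i := by
      simp only [Matrix.add_mulVec, ← Matrix.mulVec_mulVec, Pi.add_apply, Matrix.mulVec_add]
      ring
    rw [halg]
    linarith [h]
  have hTΦ₁ : ∀ i, F₁.mulVec s i + bc₁ i ≤ Φ₁ s i := by
    intro i
    simp only [hΦ₁, hF₁, hbc₁, Pi.sub_apply]
    exact hTangent f₁ Df₁ A₁ B₁ hconvf₁ hDf₁ hABf₁ i
  have hTΦ₂ : ∀ i, F₂.mulVec s i + bc₂ i ≤ Φ₂ s i := by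
    intro i
    simp only [hΦ₂, hF₂, hbc₂, Pi.sub_apply]
    exact hTangent f₂ Df₂ A₂ B₂ hconvf₂ hDf₂ hABf₂ i
  have hTΨ₁ : ∀ l, G₁.mulVec s l + gc₁ l ≤ Ψ₁ s l := by
    intro l
    simp only [hΨ₁, hG₁, hgc₁, Pi.sub_apply]
    exact hTangent g₁ Dg₁ Ag₁ Bg₁ hconvg₁ hDg₁ hABg₁ l
  have hTΨ₂ : ∀ l, G₂.mulVec s l + gc₂ l ≤ Ψ₂ s l := by
    intro l
    simp only [hΨ₂, hG₂, hgc₂, Pi.sub_apply]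
    exact hTangent g₂ Dg₂ Ag₂ Bg₂ hconvg₂ hDg₂ hABg₂ l
  -- θ decomposition facts
  have hθpm : ∀ r l, θp r l + θm r l = θv r l := by
    intro r l
    simp only [hθp, hθm]
    rw [max_add_min, add_zero]
  have hθp0 : ∀ r l, 0 ≤ θp r l := by
    intro r l
    simp only [hθp]
    exact le_max_right _ _
  have hθm0 : ∀ r l, θm r l ≤ 0 := by
    intro r l
    simp only [hθm]
    exact min_le_right _ _
  -- sum-manipulation helpers
  have hswapJR : ∀ (T : Fin (n+1) → Fin M → ℝ),
      ∑ j, lam j * ∑ r, mu r * T j r = ∑ r, mu r * ∑ j, lam j * T j r := by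
    intro T
    simp_rw [Finset.mul_sum]
    rw [Finset.sum_comm]
    exact Finset.sum_congr rfl fun r _ => Finset.sum_congr rfl fun j _ => by ring
  have hswapJI : ∀ (T : Fin (n+1) → Fin n → ℝ),
      ∑ j, lam j * ∑ i, T j i = ∑ i, ∑ j, lam j * T j i := by
    intro T
    simp_rw [Finset.mul_sum]
    exact Finset.sum_comm
  have hcomb : ∀ (A B z zz : ℝ) (x y a b : Fin (n+1) → ℝ),
      ∑ j, lam j * (A * (δ * x j - δ * y j - δ * z) - B * (δ * a j - δ * b j - δ * zz))
        = A * (δ * (∑ j, lam j * x j) - δ * (∑ j, lam j * y j) - δ * z)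
          - B * (δ * (∑ j, lam j * a j) - δ * (∑ j, lam j * b j) - δ * zz) := by
    intro A B z zz x y a b
    rw [Finset.sum_congr rfl (fun j _ => show
      lam j * (A * (δ * x j - δ * y j - δ * z) - B * (δ * a j - δ * b j - δ * zz))
        = (A * δ) * (lam j * x j) - (A * δ) * (lam j * y j) - lam j * (A * (δ * z))
          - ((B * δ) * (lam j * a j) - (B * δ) * (lam j * b j) - lam j * (B * (δ * zz)))
      from by ring)]
    simp only [Finset.sum_sub_distrib, ← Finset.mul_sum, ← Finset.sum_mul, hlam1, one_mul]
    ring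
  have hdotexp : ∀ (P Q X Y Z XX YY ZZ : Fin p → ℝ),
      P ⬝ᵥ (δ • X - δ • Y - δ • Z) - Q ⬝ᵥ (δ • XX - δ • YY - δ • ZZ)
        = ∑ l, (P l * (δ * X l - δ * Y l - δ * Z l)
            - Q l * (δ * XX l - δ * YY l - δ * ZZ l)) := by
    intro P Q X Y Z XX YY ZZ
    simp only [dotProduct, Pi.sub_apply, Pi.smul_apply, smul_eq_mul,
      Finset.sum_sub_distrib]
  have hdotθ : ∀ (v : Fin p → ℝ), v ⬝ᵥ θ = ∑ r, mu r * (v ⬝ᵥ θv r) := by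
    intro v
    rw [hθv]
    simp only [dotProduct, Finset.sum_apply, Pi.smul_apply, smul_eq_mul,
      Finset.mul_sum]
    rw [Finset.sum_comm]
    exact Finset.sum_congr rfl fun r _ => Finset.sum_congr rfl fun l _ => by ring
  -- rewrite the goal in terms of the increments
  have hf₁s : f₁ (x₀ + s, u₀ + K.mulVec s + c) - f₁ (x₀, u₀) = Φ₁ s := by
    simp only [hΦ₁]
  have hf₂s : f₂ (x₀ + s, u₀ + K.mulVec s + c) - f₂ (x₀, u₀) = Φ₂ s := by
    simp only [hΦ₂]
  have hg₁s : g₁ (x₀ + s, u₀ + K.mulVec s + c) - g₁ (x₀, u₀) = Ψ₁ s := by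
    simp only [hΨ₁]
  have hg₂s : g₂ (x₀ + s, u₀ + K.mulVec s + c) - g₂ (x₀, u₀) = Ψ₂ s := by
    simp only [hΨ₂]
  simp only [simplexSet, Set.mem_setOf_eq]
  rw [hf₁s, hf₂s, hg₁s, hg₂s]
  constructor
  · -- componentwise bound
    intro i
    simp only [Pi.add_apply, Pi.sub_apply, Pi.smul_apply, smul_eq_mul]
    -- scalarized vertex inequality
    have hα2 : ∀ (j : Fin (n+1)) (r : Fin M),
        -(V j i) + δ * Φ₂ (V j) i - δ * F₁.mulVec (V j) i - δ * bc₁ i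
          + e i * (θp r ⬝ᵥ (δ • Ψ₂ (V j) - δ • G₁.mulVec (V j) - δ • gc₁) - θm r ⬝ᵥ (δ • Ψ₁ (V j) - δ • G₂.mulVec (V j) - δ • gc₂)) - δ * wmin i ≤ α' i := by
      intro j r
      have h := hα' j r i
      simp only [Pi.add_apply, Pi.sub_apply, Pi.neg_apply, Pi.smul_apply, smul_eq_mul] at h
      simp only [hΦ₂, hΨ₁, hΨ₂, hθp, hθm, Pi.sub_apply]
      linarith [h]
    -- per-parameter-vertex dot bound
    have hperR : ∀ r, -(δ * ((Ψ₁ s - Ψ₂ s) ⬝ᵥ θv r)) ≤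
        ∑ j, lam j * (θp r ⬝ᵥ (δ • Ψ₂ (V j) - δ • G₁.mulVec (V j) - δ • gc₁) - θm r ⬝ᵥ (δ • Ψ₁ (V j) - δ • G₂.mulVec (V j) - δ • gc₂)) := by
      intro r
      calc -(δ * ((Ψ₁ s - Ψ₂ s) ⬝ᵥ θv r))
          = ∑ l, -(δ * ((Ψ₁ s l - Ψ₂ s l) * θv r l)) := by
            simp only [dotProduct, Pi.sub_apply, Finset.mul_sum]
            rw [Finset.sum_neg_distrib]
        _ ≤ ∑ l, (θp r l * (δ * (∑ j, lam j * Ψ₂ (V j) l) - δ * G₁.mulVec s l - δ * gc₁ l)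
              - θm r l * (δ * (∑ j, lam j * Ψ₁ (V j) l) - δ * G₂.mulVec s l - δ * gc₂ l)) := by
            apply Finset.sum_le_sum
            intro l _
            exact scalar_key δ (Ψ₁ s l) (Ψ₂ s l) (∑ j, lam j * Ψ₁ (V j) l)
              (∑ j, lam j * Ψ₂ (V j) l) (G₁.mulVec s l) (gc₁ l) (G₂.mulVec s l) (gc₂ l)
              (θp r l) (θm r l) (θv r l) hδ (hθp0 r l) (hθm0 r l) (hθpm r l)
              (hTΨ₁ l) (hJΨ₁ l) (hTΨ₂ l) (hJΨ₂ l)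
        _ = ∑ j, lam j * (θp r ⬝ᵥ (δ • Ψ₂ (V j) - δ • G₁.mulVec (V j) - δ • gc₁) - θm r ⬝ᵥ (δ • Ψ₁ (V j) - δ • G₂.mulVec (V j) - δ • gc₂)) := by
            have e1 : ∀ j : Fin (n+1), lam j * (θp r ⬝ᵥ (δ • Ψ₂ (V j) - δ • G₁.mulVec (V j) - δ • gc₁) - θm r ⬝ᵥ (δ • Ψ₁ (V j) - δ • G₂.mulVec (V j) - δ • gc₂))
                = ∑ l, lam j * (θp r l * (δ * Ψ₂ (V j) l - δ * G₁.mulVec (V j) l - δ * gc₁ l)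
                  - θm r l * (δ * Ψ₁ (V j) l - δ * G₂.mulVec (V j) l - δ * gc₂ l)) := by
              intro j
              rw [hdotexp (θp r) (θm r) (Ψ₂ (V j)) (G₁.mulVec (V j)) gc₁
                (Ψ₁ (V j)) (G₂.mulVec (V j)) gc₂, Finset.mul_sum]
            rw [Finset.sum_congr rfl fun j _ => e1 j, Finset.sum_comm]
            refine Finset.sum_congr rfl fun l _ => ?_
            rw [hmulVecS G₁ l, hmulVecS G₂ l]
            exact (hcomb (θp r l) (θm r l) (gc₁ l) (gc₂ l) (fun j => Ψ₂ (V j) l)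
              (fun j => G₁.mulVec (V j) l) (fun j => Ψ₁ (V j) l)
              (fun j => G₂.mulVec (V j) l)).symm
    have hdot : -(δ * ((Ψ₁ s - Ψ₂ s) ⬝ᵥ θ)) ≤
        ∑ r, mu r * ∑ j, lam j * (θp r ⬝ᵥ (δ • Ψ₂ (V j) - δ • G₁.mulVec (V j) - δ • gc₁) - θm r ⬝ᵥ (δ • Ψ₁ (V j) - δ • G₂.mulVec (V j) - δ • gc₂)) := by
      rw [hdotθ (Ψ₁ s - Ψ₂ s)]
      have hneg : -(δ * ∑ r, mu r * ((Ψ₁ s - Ψ₂ s) ⬝ᵥ θv r))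
          = ∑ r, mu r * -(δ * ((Ψ₁ s - Ψ₂ s) ⬝ᵥ θv r)) := by
        rw [Finset.mul_sum, ← Finset.sum_neg_distrib]
        exact Finset.sum_congr rfl fun r _ => by ring
      rw [hneg]
      exact Finset.sum_le_sum fun r _ => mul_le_mul_of_nonneg_left (hperR r) (hmu0 r)
    -- combine vertex inequalities over parameter vertices
    have hvert : ∀ j, -(V j i) + δ * Φ₂ (V j) i - δ * F₁.mulVec (V j) i - δ * bc₁ i
        + e i * (∑ r, mu r * (θp r ⬝ᵥ (δ • Ψ₂ (V j) - δ • G₁.mulVec (V j) - δ • gc₁) - θm r ⬝ᵥ (δ • Ψ₁ (V j) - δ • G₂.mulVec (V j) - δ • gc₂))) - δ * wmin i ≤ α' i := by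
      intro j
      have h := Finset.sum_le_sum fun r (_ : r ∈ Finset.univ) =>
        mul_le_mul_of_nonneg_left (hα2 j r) (hmu0 r)
      rw [← Finset.sum_mul, hmu1, one_mul] at h
      have hE : ∑ r, mu r * (-(V j i) + δ * Φ₂ (V j) i - δ * F₁.mulVec (V j) i - δ * bc₁ i
            + e i * (θp r ⬝ᵥ (δ • Ψ₂ (V j) - δ • G₁.mulVec (V j) - δ • gc₁) - θm r ⬝ᵥ (δ • Ψ₁ (V j) - δ • G₂.mulVec (V j) - δ • gc₂)) - δ * wmin i)
          = -(V j i) + δ * Φ₂ (V j) i - δ * F₁.mulVec (V j) i - δ * bc₁ i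
            + e i * (∑ r, mu r * (θp r ⬝ᵥ (δ • Ψ₂ (V j) - δ • G₁.mulVec (V j) - δ • gc₁) - θm r ⬝ᵥ (δ • Ψ₁ (V j) - δ • G₂.mulVec (V j) - δ • gc₂))) - δ * wmin i := by
        rw [Finset.sum_congr rfl (fun r _ => show
          mu r * (-(V j i) + δ * Φ₂ (V j) i - δ * F₁.mulVec (V j) i - δ * bc₁ i
            + e i * (θp r ⬝ᵥ (δ • Ψ₂ (V j) - δ • G₁.mulVec (V j) - δ • gc₁) - θm r ⬝ᵥ (δ • Ψ₁ (V j) - δ • G₂.mulVec (V j) - δ • gc₂)) - δ * wmin i)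
          = mu r * (-(V j i) + δ * Φ₂ (V j) i - δ * F₁.mulVec (V j) i - δ * bc₁ i - δ * wmin i)
            + e i * (mu r * (θp r ⬝ᵥ (δ • Ψ₂ (V j) - δ • G₁.mulVec (V j) - δ • gc₁) - θm r ⬝ᵥ (δ • Ψ₁ (V j) - δ • G₂.mulVec (V j) - δ • gc₂))) from by ring)]
        rw [Finset.sum_add_distrib, ← Finset.sum_mul, ← Finset.mul_sum, hmu1, one_mul]
        ring
      rw [hE] at h
      linarith [h]
    -- combine over simplex vertices
    have hcombine := Finset.sum_le_sum fun j (_ : j ∈ Finset.univ) =>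
      mul_le_mul_of_nonneg_left (hvert j) (hlam0 j)
    rw [← Finset.sum_mul, hlam1, one_mul] at hcombine
    have hEXP : ∑ j, lam j * (-(V j i) + δ * Φ₂ (V j) i - δ * F₁.mulVec (V j) i - δ * bc₁ i
          + e i * (∑ r, mu r * (θp r ⬝ᵥ (δ • Ψ₂ (V j) - δ • G₁.mulVec (V j) - δ • gc₁) - θm r ⬝ᵥ (δ • Ψ₁ (V j) - δ • G₂.mulVec (V j) - δ • gc₂))) - δ * wmin i)
        = -(s i) + δ * (∑ j, lam j * Φ₂ (V j) i) - δ * F₁.mulVec s i - δ * bc₁ i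
          + e i * (∑ r, mu r * ∑ j, lam j * (θp r ⬝ᵥ (δ • Ψ₂ (V j) - δ • G₁.mulVec (V j) - δ • gc₁) - θm r ⬝ᵥ (δ • Ψ₁ (V j) - δ • G₂.mulVec (V j) - δ • gc₂))) - δ * wmin i := by
      rw [Finset.sum_congr rfl (fun j _ => show
        lam j * (-(V j i) + δ * Φ₂ (V j) i - δ * F₁.mulVec (V j) i - δ * bc₁ i
          + e i * (∑ r, mu r * (θp r ⬝ᵥ (δ • Ψ₂ (V j) - δ • G₁.mulVec (V j) - δ • gc₁) - θm r ⬝ᵥ (δ • Ψ₁ (V j) - δ • G₂.mulVec (V j) - δ • gc₂))) - δ * wmin i)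
        = -(lam j * V j i) + δ * (lam j * Φ₂ (V j) i) - δ * (lam j * F₁.mulVec (V j) i)
          - lam j * (δ * bc₁ i) + e i * (lam j * (∑ r, mu r * (θp r ⬝ᵥ (δ • Ψ₂ (V j) - δ • G₁.mulVec (V j) - δ • gc₁) - θm r ⬝ᵥ (δ • Ψ₁ (V j) - δ • G₂.mulVec (V j) - δ • gc₂))))
          - lam j * (δ * wmin i) from by ring)]
      simp only [Finset.sum_sub_distrib, Finset.sum_add_distrib, Finset.sum_neg_distrib,
        ← Finset.mul_sum, ← Finset.sum_mul, hlam1, one_mul]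
      rw [← hs_i i, ← hmulVecS F₁ i, hswapJR (fun j r => (θp r ⬝ᵥ (δ • Ψ₂ (V j) - δ • G₁.mulVec (V j) - δ • gc₁) - θm r ⬝ᵥ (δ • Ψ₁ (V j) - δ • G₂.mulVec (V j) - δ • gc₂)))]
    rw [hEXP] at hcombine
    have hT := mul_le_mul_of_nonneg_left (hTΦ₁ i) hδ.le
    have hJ := mul_le_mul_of_nonneg_left (hJΦ₂ i) hδ.le
    have hDOT := mul_le_mul_of_nonneg_left hdot (he i)
    have hWδ := mul_le_mul_of_nonneg_left (hwmin i) hδ.le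
    nlinarith [hcombine, hT, hJ, hDOT, hWδ]
  · -- sum bound
    simp only [Pi.add_apply, Pi.sub_apply, Pi.smul_apply, smul_eq_mul]
    have hβ2 : ∀ (j : Fin (n+1)) (r : Fin M),
        (∑ i, (V j i + δ * Φ₁ (V j) i - δ * F₂.mulVec (V j) i - δ * bc₂ i))
          + (∑ i, e i) * (θp r ⬝ᵥ (δ • Ψ₁ (V j) - δ • G₂.mulVec (V j) - δ • gc₂) - θm r ⬝ᵥ (δ • Ψ₂ (V j) - δ • G₁.mulVec (V j) - δ • gc₁)) + δ * wbar ≤ β' := by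
      intro j r
      have h := hβ' j r
      simp only [Pi.add_apply, Pi.sub_apply, Pi.smul_apply, smul_eq_mul] at h
      simp only [hΦ₁, hΨ₁, hΨ₂, hθp, hθm, Pi.sub_apply]
      linarith [h]
    have hperR' : ∀ r, δ * ((Ψ₁ s - Ψ₂ s) ⬝ᵥ θv r) ≤
        ∑ j, lam j * (θp r ⬝ᵥ (δ • Ψ₁ (V j) - δ • G₂.mulVec (V j) - δ • gc₂) - θm r ⬝ᵥ (δ • Ψ₂ (V j) - δ • G₁.mulVec (V j) - δ • gc₁)) := by
      intro r
      calc δ * ((Ψ₁ s - Ψ₂ s) ⬝ᵥ θv r)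
          = ∑ l, δ * ((Ψ₁ s l - Ψ₂ s l) * θv r l) := by
            simp only [dotProduct, Pi.sub_apply, Finset.mul_sum]
        _ ≤ ∑ l, (θp r l * (δ * (∑ j, lam j * Ψ₁ (V j) l) - δ * G₂.mulVec s l - δ * gc₂ l)
              - θm r l * (δ * (∑ j, lam j * Ψ₂ (V j) l) - δ * G₁.mulVec s l - δ * gc₁ l)) := by
            apply Finset.sum_le_sum
            intro l _
            exact scalar_key' δ (Ψ₁ s l) (Ψ₂ s l) (∑ j, lam j * Ψ₁ (V j) l)
              (∑ j, lam j * Ψ₂ (V j) l) (G₁.mulVec s l) (gc₁ l) (G₂.mulVec s l) (gc₂ l)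
              (θp r l) (θm r l) (θv r l) hδ (hθp0 r l) (hθm0 r l) (hθpm r l)
              (hTΨ₁ l) (hJΨ₁ l) (hTΨ₂ l) (hJΨ₂ l)
        _ = ∑ j, lam j * (θp r ⬝ᵥ (δ • Ψ₁ (V j) - δ • G₂.mulVec (V j) - δ • gc₂) - θm r ⬝ᵥ (δ • Ψ₂ (V j) - δ • G₁.mulVec (V j) - δ • gc₁)) := by
            have e1 : ∀ j : Fin (n+1), lam j * (θp r ⬝ᵥ (δ • Ψ₁ (V j) - δ • G₂.mulVec (V j) - δ • gc₂) - θm r ⬝ᵥ (δ • Ψ₂ (V j) - δ • G₁.mulVec (V j) - δ • gc₁))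
                = ∑ l, lam j * (θp r l * (δ * Ψ₁ (V j) l - δ * G₂.mulVec (V j) l - δ * gc₂ l)
                  - θm r l * (δ * Ψ₂ (V j) l - δ * G₁.mulVec (V j) l - δ * gc₁ l)) := by
              intro j
              rw [hdotexp (θp r) (θm r) (Ψ₁ (V j)) (G₂.mulVec (V j)) gc₂
                (Ψ₂ (V j)) (G₁.mulVec (V j)) gc₁, Finset.mul_sum]
            rw [Finset.sum_congr rfl fun j _ => e1 j, Finset.sum_comm]
            refine Finset.sum_congr rfl fun l _ => ?_
            rw [hmulVecS G₁ l, hmulVecS G₂ l]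
            exact (hcomb (θp r l) (θm r l) (gc₂ l) (gc₁ l) (fun j => Ψ₁ (V j) l)
              (fun j => G₂.mulVec (V j) l) (fun j => Ψ₂ (V j) l)
              (fun j => G₁.mulVec (V j) l)).symm
    have hdot' : δ * ((Ψ₁ s - Ψ₂ s) ⬝ᵥ θ) ≤
        ∑ r, mu r * ∑ j, lam j * (θp r ⬝ᵥ (δ • Ψ₁ (V j) - δ • G₂.mulVec (V j) - δ • gc₂) - θm r ⬝ᵥ (δ • Ψ₂ (V j) - δ • G₁.mulVec (V j) - δ • gc₁)) := by
      rw [hdotθ (Ψ₁ s - Ψ₂ s), Finset.mul_sum]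
      refine Finset.sum_le_sum fun r _ => ?_
      have := mul_le_mul_of_nonneg_left (hperR' r) (hmu0 r)
      nlinarith [this]
    have hvert' : ∀ j, (∑ i, (V j i + δ * Φ₁ (V j) i - δ * F₂.mulVec (V j) i - δ * bc₂ i))
        + (∑ i, e i) * (∑ r, mu r * (θp r ⬝ᵥ (δ • Ψ₁ (V j) - δ • G₂.mulVec (V j) - δ • gc₂) - θm r ⬝ᵥ (δ • Ψ₂ (V j) - δ • G₁.mulVec (V j) - δ • gc₁))) + δ * wbar ≤ β' := by
      intro j
      have h := Finset.sum_le_sum fun r (_ : r ∈ Finset.univ) =>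
        mul_le_mul_of_nonneg_left (hβ2 j r) (hmu0 r)
      rw [← Finset.sum_mul, hmu1, one_mul] at h
      have hE : ∑ r, mu r * ((∑ i, (V j i + δ * Φ₁ (V j) i - δ * F₂.mulVec (V j) i - δ * bc₂ i))
            + (∑ i, e i) * (θp r ⬝ᵥ (δ • Ψ₁ (V j) - δ • G₂.mulVec (V j) - δ • gc₂) - θm r ⬝ᵥ (δ • Ψ₂ (V j) - δ • G₁.mulVec (V j) - δ • gc₁)) + δ * wbar)
          = (∑ i, (V j i + δ * Φ₁ (V j) i - δ * F₂.mulVec (V j) i - δ * bc₂ i))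
            + (∑ i, e i) * (∑ r, mu r * (θp r ⬝ᵥ (δ • Ψ₁ (V j) - δ • G₂.mulVec (V j) - δ • gc₂) - θm r ⬝ᵥ (δ • Ψ₂ (V j) - δ • G₁.mulVec (V j) - δ • gc₁))) + δ * wbar := by
        rw [Finset.sum_congr rfl (fun r _ => show
          mu r * ((∑ i, (V j i + δ * Φ₁ (V j) i - δ * F₂.mulVec (V j) i - δ * bc₂ i))
            + (∑ i, e i) * (θp r ⬝ᵥ (δ • Ψ₁ (V j) - δ • G₂.mulVec (V j) - δ • gc₂) - θm r ⬝ᵥ (δ • Ψ₂ (V j) - δ • G₁.mulVec (V j) - δ • gc₁)) + δ * wbar)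
          = mu r * ((∑ i, (V j i + δ * Φ₁ (V j) i - δ * F₂.mulVec (V j) i - δ * bc₂ i))
              + δ * wbar)
            + (∑ i, e i) * (mu r * (θp r ⬝ᵥ (δ • Ψ₁ (V j) - δ • G₂.mulVec (V j) - δ • gc₂) - θm r ⬝ᵥ (δ • Ψ₂ (V j) - δ • G₁.mulVec (V j) - δ • gc₁))) from by ring)]
        rw [Finset.sum_add_distrib, ← Finset.sum_mul, ← Finset.mul_sum, hmu1, one_mul]
        ring
      rw [hE] at h
      linarith [h]
    have hcombine := Finset.sum_le_sum fun j (_ : j ∈ Finset.univ) =>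
      mul_le_mul_of_nonneg_left (hvert' j) (hlam0 j)
    rw [← Finset.sum_mul, hlam1, one_mul] at hcombine
    have hEXP : ∑ j, lam j * ((∑ i, (V j i + δ * Φ₁ (V j) i - δ * F₂.mulVec (V j) i - δ * bc₂ i))
          + (∑ i, e i) * (∑ r, mu r * (θp r ⬝ᵥ (δ • Ψ₁ (V j) - δ • G₂.mulVec (V j) - δ • gc₂) - θm r ⬝ᵥ (δ • Ψ₂ (V j) - δ • G₁.mulVec (V j) - δ • gc₁))) + δ * wbar)
        = (∑ i, (s i + δ * (∑ j, lam j * Φ₁ (V j) i) - δ * F₂.mulVec s i - δ * bc₂ i))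
          + (∑ i, e i) * (∑ r, mu r * ∑ j, lam j * (θp r ⬝ᵥ (δ • Ψ₁ (V j) - δ • G₂.mulVec (V j) - δ • gc₂) - θm r ⬝ᵥ (δ • Ψ₂ (V j) - δ • G₁.mulVec (V j) - δ • gc₁))) + δ * wbar := by
      rw [Finset.sum_congr rfl (fun j _ => show
        lam j * ((∑ i, (V j i + δ * Φ₁ (V j) i - δ * F₂.mulVec (V j) i - δ * bc₂ i))
          + (∑ i, e i) * (∑ r, mu r * (θp r ⬝ᵥ (δ • Ψ₁ (V j) - δ • G₂.mulVec (V j) - δ • gc₂) - θm r ⬝ᵥ (δ • Ψ₂ (V j) - δ • G₁.mulVec (V j) - δ • gc₁))) + δ * wbar)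
        = lam j * (∑ i, (V j i + δ * Φ₁ (V j) i - δ * F₂.mulVec (V j) i - δ * bc₂ i))
          + (∑ i, e i) * (lam j * (∑ r, mu r * (θp r ⬝ᵥ (δ • Ψ₁ (V j) - δ • G₂.mulVec (V j) - δ • gc₂) - θm r ⬝ᵥ (δ • Ψ₂ (V j) - δ • G₁.mulVec (V j) - δ • gc₁))))
          + lam j * (δ * wbar) from by ring)]
      rw [Finset.sum_add_distrib, Finset.sum_add_distrib, ← Finset.mul_sum,
        ← Finset.sum_mul, hlam1, one_mul,
        hswapJR (fun j r => (θp r ⬝ᵥ (δ • Ψ₁ (V j) - δ • G₂.mulVec (V j) - δ • gc₂) - θm r ⬝ᵥ (δ • Ψ₂ (V j) - δ • G₁.mulVec (V j) - δ • gc₁))),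
        hswapJI (fun j i => V j i + δ * Φ₁ (V j) i - δ * F₂.mulVec (V j) i - δ * bc₂ i)]
      congr 1
      congr 1
      refine Finset.sum_congr rfl fun i _ => ?_
      rw [Finset.sum_congr rfl (fun j _ => show
        lam j * (V j i + δ * Φ₁ (V j) i - δ * F₂.mulVec (V j) i - δ * bc₂ i)
        = lam j * V j i + δ * (lam j * Φ₁ (V j) i) - δ * (lam j * F₂.mulVec (V j) i)
          - lam j * (δ * bc₂ i) from by ring)]
      simp only [Finset.sum_sub_distrib, Finset.sum_add_distrib,
        ← Finset.mul_sum, ← Finset.sum_mul, hlam1, one_mul]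
      rw [← hs_i i, ← hmulVecS F₂ i]
    rw [hEXP] at hcombine
    -- bound the goal sum
    have hsplit : ∑ i, (s i + δ * Φ₁ s i - δ * Φ₂ s i + δ * ((Ψ₁ s - Ψ₂ s) ⬝ᵥ θ) * e i
          + δ * w i)
        = (∑ i, s i) + (∑ i, δ * Φ₁ s i) - (∑ i, δ * Φ₂ s i)
          + δ * ((Ψ₁ s - Ψ₂ s) ⬝ᵥ θ) * (∑ i, e i) + δ * (∑ i, w i) := by
      simp only [Finset.sum_add_distrib, Finset.sum_sub_distrib, ← Finset.mul_sum]
    rw [hsplit]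
    have h1 : ∑ i, δ * Φ₁ s i ≤ ∑ i, δ * (∑ j, lam j * Φ₁ (V j) i) :=
      Finset.sum_le_sum fun i _ => mul_le_mul_of_nonneg_left (hJΦ₁ i) hδ.le
    have h2 : ∑ i, (δ * F₂.mulVec s i + δ * bc₂ i) ≤ ∑ i, δ * Φ₂ s i :=
      Finset.sum_le_sum fun i _ => by
        have := mul_le_mul_of_nonneg_left (hTΦ₂ i) hδ.le
        nlinarith [this]
    have h3 : δ * ((Ψ₁ s - Ψ₂ s) ⬝ᵥ θ) * (∑ i, e i) ≤
        (∑ i, e i) * (∑ r, mu r * ∑ j, lam j * (θp r ⬝ᵥ (δ • Ψ₁ (V j) - δ • G₂.mulVec (V j) - δ • gc₂) - θm r ⬝ᵥ (δ • Ψ₂ (V j) - δ • G₁.mulVec (V j) - δ • gc₁))) := by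
      have hE0 : 0 ≤ ∑ i, e i := Finset.sum_nonneg fun i _ => he i
      have := mul_le_mul_of_nonneg_left hdot' hE0
      nlinarith [this]
    have h4 : δ * (∑ i, w i) ≤ δ * wbar := mul_le_mul_of_nonneg_left hwbar hδ.le
    have h5 : ∑ i, (s i + δ * (∑ j, lam j * Φ₁ (V j) i) - δ * F₂.mulVec s i - δ * bc₂ i)
        = (∑ i, s i) + (∑ i, δ * (∑ j, lam j * Φ₁ (V j) i))
          - ∑ i, (δ * F₂.mulVec s i + δ * bc₂ i) := by
      simp only [Finset.sum_add_distrib, Finset.sum_sub_distrib]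
      ring
    rw [h5] at hcombine
    linarith [hcombine, h1, h2, h3, h4]
end
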